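/- CbV embedding lemma: for every dCBV term M, if the dBang translation Mᵛ reduces in one dBang step to N, then there exists a dCBV term P such that M reduces in dCBV in finitely many steps to P and N reduces in dBang in finitely many steps to Pᵛ. -/

import Mathlib

namespace DBangPaper

/-- dBang terms (with ⊥ used for Böhm approximants). -/
inductive DTerm : Type
  | var : ℕ → DTerm
  | lam : ℕ → DTerm → DTerm
  | app : DTerm → DTerm → DTerm
  | bang : DTerm → DTerm
  | der : DTerm → DTerm
  | sub : DTerm → ℕ → DTerm → DTerm   -- `sub M x N` is M[N/x]
  | bot : DTerm
  deriving DecidableEq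

/-- meta-level substitution M{N/x} (written `dsubst N x M`). -/
def dsubst (N : DTerm) (x : ℕ) : DTerm → DTerm
  | .var y => if y = x then N else .var y
  | .lam y M => if y = x then .lam y M else .lam y (dsubst N x M)
  | .app M P => .app (dsubst N x M) (dsubst N x P)
  | .bang M => .bang (dsubst N x M)
  | .der M => .der (dsubst N x M)
  | .sub M y P =>
      if y = x then .sub M y (dsubst N x P)
      else .sub (dsubst N x M) y (dsubst N x P)
  | .bot => .bot

/-- list contexts L = □[N₁/x₁]…[Nₖ/xₖ], applied to a term. -/
def lfill (l : List (ℕ × DTerm)) (M : DTerm) : DTerm :=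
  l.foldl (fun A p => .sub A p.1 p.2) M

/-- root (at-a-distance) reduction rules of dBang. -/
inductive Root : DTerm → DTerm → Prop
  | der (l N) : Root (.der (lfill l (.bang N))) (lfill l N)
  | beta (l x M N) : Root (.app (lfill l (.lam x M)) N) (lfill l (.sub M x N))
  | subst (M x l N) : Root (.sub M x (lfill l (.bang N))) (lfill l (dsubst N x M))

/-- full one-step dBang reduction (closure under all contexts). -/
inductive Step : DTerm → DTerm → Prop
  | root {M N} : Root M N → Step M N
  | lam (x) {M N} : Step M N → Step (.lam x M) (.lam x N)
  | appL {M M'} (N) : Step M M' → Step (.app M N) (.app M' N)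
  | appR (M) {N N'} : Step N N' → Step (.app M N) (.app M N')
  | bang {M N} : Step M N → Step (.bang M) (.bang N)
  | der {M N} : Step M N → Step (.der M) (.der N)
  | subL {M M'} (x N) : Step M M' → Step (.sub M x N) (.sub M' x N)
  | subR (M x) {N N'} : Step N N' → Step (.sub M x N) (.sub M x N')

/-- surface one-step dBang reduction (not under a bang). -/
inductive SStep : DTerm → DTerm → Prop
  | root {M N} : Root M N → SStep M N
  | lam (x) {M N} : SStep M N → SStep (.lam x M) (.lam x N)
  | appL {M M'} (N) : SStep M M' → SStep (.app M N) (.app M' N)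
  | appR (M) {N N'} : SStep N N' → SStep (.app M N) (.app M N')
  | der {M N} : SStep M N → SStep (.der M) (.der N)
  | subL {M M'} (x N) : SStep M M' → SStep (.sub M x N) (.sub M' x N)
  | subR (M x) {N N'} : SStep N N' → SStep (.sub M x N) (.sub M x N')

def Steps : DTerm → DTerm → Prop := Relation.ReflTransGen Step
def SSteps : DTerm → DTerm → Prop := Relation.ReflTransGen SStep

/-- resource (δBang) terms: bags of terms replace bangs. -/
inductive RTerm : Type
  | var : ℕ → RTerm
  | lam : ℕ → RTerm → RTerm
  | app : RTerm → RTerm → RTerm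
  | bag : List RTerm → RTerm
  | der : RTerm → RTerm
  | sub : RTerm → ℕ → RTerm → RTerm

mutual
  /-- linear (resource) substitution: `LSub m x ps m'` means m' is one result of
      substituting the resources `ps` linearly for the occurrences of x in m. -/
  inductive LSub : RTerm → ℕ → List RTerm → RTerm → Prop
    | varHit (x p) : LSub (.var x) x [p] p
    | varMiss {y x : ℕ} (h : y ≠ x) : LSub (.var y) x [] (.var y)
    | lam {m x ps m'} (y : ℕ) (hy : y ≠ x) :
        LSub m x ps m' → LSub (.lam y m) x ps (.lam y m')
    | app {m n x ps qs rs m' n'} : LSub m x ps m' → LSub n x qs n' →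
        (ps ++ qs).Perm rs → LSub (.app m n) x rs (.app m' n')
    | der {m x ps m'} : LSub m x ps m' → LSub (.der m) x ps (.der m')
    | sub {m n x ps qs rs m' n'} (y : ℕ) (hy : y ≠ x) : LSub m x ps m' →
        LSub n x qs n' → (ps ++ qs).Perm rs → LSub (.sub m y n) x rs (.sub m' y n')
    | bag {ms x ps ms'} : LSubs ms x ps ms' → LSub (.bag ms) x ps (.bag ms')
  inductive LSubs : List RTerm → ℕ → List RTerm → List RTerm → Prop
    | nil (x) : LSubs [] x [] []
    | cons {m ms x ps qs rs m' ms'} : LSub m x ps m' → LSubs ms x qs ms' →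
        (ps ++ qs).Perm rs → LSubs (m :: ms) x rs (m' :: ms')
end

/-- resource list contexts. -/
def rfill (l : List (ℕ × RTerm)) (m : RTerm) : RTerm :=
  l.foldl (fun a p => .sub a p.1 p.2) m

/-- root resource reduction (producing a single term of the resulting sum). -/
inductive RRoot : RTerm → RTerm → Prop
  | der (l n) : RRoot (.der (rfill l (.bag [n]))) (rfill l n)
  | beta (l x m p) : RRoot (.app (rfill l (.lam x m)) p) (rfill l (.sub m x p))
  | subst {m : RTerm} {x ps m'} (l) : LSub m x ps m' →
      RRoot (.sub m x (rfill l (.bag ps))) (rfill l m')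

/-- root resource reduction to the empty sum ∅ (arity mismatch). -/
inductive RRootE : RTerm → Prop
  | der (l ms) (h : ms.length ≠ 1) : RRootE (.der (rfill l (.bag ms)))
  | subst (m x ps l) (h : ¬ ∃ m', LSub m x ps m') :
      RRootE (.sub m x (rfill l (.bag ps)))

/-- full one-step resource reduction (to a term of the resulting sum). -/
inductive RStep : RTerm → RTerm → Prop
  | root {m n} : RRoot m n → RStep m n
  | lam (x) {m n} : RStep m n → RStep (.lam x m) (.lam x n)
  | appL {m m'} (n) : RStep m m' → RStep (.app m n) (.app m' n)
  | appR (m) {n n'} : RStep n n' → RStep (.app m n) (.app m n')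
  | der {m n} : RStep m n → RStep (.der m) (.der n)
  | subL {m m'} (x n) : RStep m m' → RStep (.sub m x n) (.sub m' x n)
  | subR (m x) {n n'} : RStep n n' → RStep (.sub m x n) (.sub m x n')
  | bag {m m'} (pre post) : RStep m m' →
      RStep (.bag (pre ++ m :: post)) (.bag (pre ++ m' :: post))

/-- full one-step resource reduction to the empty sum. -/
inductive REmpty : RTerm → Prop
  | root {m} : RRootE m → REmpty m
  | lam (x) {m} : REmpty m → REmpty (.lam x m)
  | appL {m} (n) : REmpty m → REmpty (.app m n)
  | appR (m) {n} : REmpty n → REmpty (.app m n)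
  | der {m} : REmpty m → REmpty (.der m)
  | subL {m} (x n) : REmpty m → REmpty (.sub m x n)
  | subR (m x) {n} : REmpty n → REmpty (.sub m x n)
  | bag {m} (pre post) : REmpty m → REmpty (.bag (pre ++ m :: post))

/-- surface one-step resource reduction. -/
inductive RSStep : RTerm → RTerm → Prop
  | root {m n} : RRoot m n → RSStep m n
  | lam (x) {m n} : RSStep m n → RSStep (.lam x m) (.lam x n)
  | appL {m m'} (n) : RSStep m m' → RSStep (.app m n) (.app m' n)
  | appR (m) {n n'} : RSStep n n' → RSStep (.app m n) (.app m n')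
  | der {m n} : RSStep m n → RSStep (.der m) (.der n)
  | subL {m m'} (x n) : RSStep m m' → RSStep (.sub m x n) (.sub m' x n)
  | subR (m x) {n n'} : RSStep n n' → RSStep (.sub m x n) (.sub m x n')

/-- surface one-step resource reduction to the empty sum. -/
inductive RSEmpty : RTerm → Prop
  | root {m} : RRootE m → RSEmpty m
  | lam (x) {m} : RSEmpty m → RSEmpty (.lam x m)
  | appL {m} (n) : RSEmpty m → RSEmpty (.app m n)
  | appR (m) {n} : RSEmpty n → RSEmpty (.app m n)
  | der {m} : RSEmpty m → RSEmpty (.der m)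
  | subL {m} (x n) : RSEmpty m → RSEmpty (.sub m x n)
  | subR (m x) {n} : RSEmpty n → RSEmpty (.sub m x n)

def RSteps : RTerm → RTerm → Prop := Relation.ReflTransGen RStep

/-- the approximation relation m ⊲ M between resource terms and dBang terms. -/
inductive Approx : RTerm → DTerm → Prop
  | var (x) : Approx (.var x) (.var x)
  | lam {m M} (x) : Approx m M → Approx (.lam x m) (.lam x M)
  | app {m M n N} : Approx m M → Approx n N → Approx (.app m n) (.app M N)
  | bang {ms M} : (∀ m ∈ ms, Approx m M) → Approx (.bag ms) (.bang M)
  | der {m M} : Approx m M → Approx (.der m) (.der M)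
  | sub {m M n N} (x) : Approx m M → Approx n N → Approx (.sub m x n) (.sub M x N)

/-- Taylor expansion of a dBang term. -/
def Taylor (M : DTerm) : Set RTerm := {m | Approx m M}

/-- a resource term is normal when it has no redex (no reduction, not even to ∅). -/
def RNormal (m : RTerm) : Prop := (¬ ∃ n, RStep m n) ∧ ¬ REmpty m

/-- normal-form Taylor expansion. -/
def NFTaylor (M : DTerm) : Set RTerm :=
  {n | RNormal n ∧ ∃ m, Approx m M ∧ RSteps m n}

/-- M is of the shape L⟨!N⟩. -/
def IsBangCtx (M : DTerm) : Prop := ∃ l N, M = lfill l (.bang N)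

/-- M is of the shape L⟨λx.N⟩. -/
def IsLamCtx (M : DTerm) : Prop := ∃ l x N, M = lfill l (.lam x N)

/-- dBang Böhm approximants. -/
inductive IsApprox : DTerm → Prop
  | bot : IsApprox .bot
  | var (x) : IsApprox (.var x)
  | lam (x) {A} : IsApprox A → IsApprox (.lam x A)
  | bang {A} : IsApprox A → IsApprox (.bang A)
  | der {A} : IsApprox A → ¬ IsBangCtx A → IsApprox (.der A)
  | app {A B} : IsApprox A → IsApprox B → ¬ IsLamCtx A → IsApprox (.app A B)
  | sub {A B} (x) : IsApprox A → IsApprox B → ¬ IsBangCtx B → IsApprox (.sub A x B)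

/-- the approximation order: A ⊑ M when A is obtained from M by replacing
    subterms by ⊥. -/
inductive SqSub : DTerm → DTerm → Prop
  | bot (M) : SqSub .bot M
  | var (x) : SqSub (.var x) (.var x)
  | lam (x) {A M} : SqSub A M → SqSub (.lam x A) (.lam x M)
  | app {A M B N} : SqSub A M → SqSub B N → SqSub (.app A B) (.app M N)
  | bang {A M} : SqSub A M → SqSub (.bang A) (.bang M)
  | der {A M} : SqSub A M → SqSub (.der A) (.der M)
  | sub {A M B N} (x) : SqSub A M → SqSub B N → SqSub (.sub A x B) (.sub M x N)

/-- the set of Böhm approximants of M. -/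
def BohmSet (M : DTerm) : Set DTerm :=
  {A | IsApprox A ∧ ∃ N, Steps M N ∧ SqSub A N}

/-- Taylor expansion of the Böhm tree of M. -/
def TaylorBT (M : DTerm) : Set RTerm :=
  {m | ∃ A ∈ BohmSet M, Approx m A}

/-- testing contexts T ::= □ | T N | (λx.T) N. -/
inductive TCtx : Type
  | hole : TCtx
  | app : TCtx → DTerm → TCtx
  | lapp : ℕ → TCtx → DTerm → TCtx

def tfill : TCtx → DTerm → DTerm
  | .hole, M => M
  | .app T N, M => .app (tfill T M) N
  | .lapp x T N, M => .app (.lam x (tfill T M)) N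

/-- meaningfulness in dBang. -/
def Meaningful (M : DTerm) : Prop := ∃ T P, SSteps (tfill T M) (.bang P)

/-- the call-by-name fragment dBang_N. -/
inductive InN : DTerm → Prop
  | var (x) : InN (.var x)
  | lam (x) {M} : InN M → InN (.lam x M)
  | app {M N} : InN M → InN N → InN (.app M (.bang N))
  | sub {M N} (x) : InN M → InN N → InN (.sub M x (.bang N))

/-! ### dCBN / dCBV -/

/-- terms of dCBN and dCBV (with ⊥ for approximants). -/
inductive NTerm : Type
  | var : ℕ → NTerm
  | lam : ℕ → NTerm → NTerm
  | app : NTerm → NTerm → NTerm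
  | sub : NTerm → ℕ → NTerm → NTerm
  | bot : NTerm
  deriving DecidableEq

def nsubst (N : NTerm) (x : ℕ) : NTerm → NTerm
  | .var y => if y = x then N else .var y
  | .lam y M => if y = x then .lam y M else .lam y (nsubst N x M)
  | .app M P => .app (nsubst N x M) (nsubst N x P)
  | .sub M y P =>
      if y = x then .sub M y (nsubst N x P)
      else .sub (nsubst N x M) y (nsubst N x P)
  | .bot => .bot

def nlfill (l : List (ℕ × NTerm)) (M : NTerm) : NTerm :=
  l.foldl (fun A p => .sub A p.1 p.2) M

def IsValueN : NTerm → Prop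
  | .var _ => True
  | .lam _ _ => True
  | _ => False

/-- dCBN reduction. -/
inductive RootN : NTerm → NTerm → Prop
  | beta (l x M N) : RootN (.app (nlfill l (.lam x M)) N) (nlfill l (.sub M x N))
  | subst (M x N) : RootN (.sub M x N) (nsubst N x M)

inductive StepN : NTerm → NTerm → Prop
  | root {M N} : RootN M N → StepN M N
  | lam (x) {M N} : StepN M N → StepN (.lam x M) (.lam x N)
  | appL {M M'} (N) : StepN M M' → StepN (.app M N) (.app M' N)
  | appR (M) {N N'} : StepN N N' → StepN (.app M N) (.app M N')
  | subL {M M'} (x N) : StepN M M' → StepN (.sub M x N) (.sub M' x N)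
  | subR (M x) {N N'} : StepN N N' → StepN (.sub M x N) (.sub M x N')

/-- dCBV reduction. -/
inductive RootV : NTerm → NTerm → Prop
  | beta (l x M N) : RootV (.app (nlfill l (.lam x M)) N) (nlfill l (.sub M x N))
  | subst (M x l) {V} (hV : IsValueN V) :
      RootV (.sub M x (nlfill l V)) (nlfill l (nsubst V x M))

inductive StepV : NTerm → NTerm → Prop
  | root {M N} : RootV M N → StepV M N
  | lam (x) {M N} : StepV M N → StepV (.lam x M) (.lam x N)
  | appL {M M'} (N) : StepV M M' → StepV (.app M N) (.app M' N)
  | appR (M) {N N'} : StepV N N' → StepV (.app M N) (.app M N')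
  | subL {M M'} (x N) : StepV M M' → StepV (.sub M x N) (.sub M' x N)
  | subR (M x) {N N'} : StepV N N' → StepV (.sub M x N) (.sub M x N')

def StepsN : NTerm → NTerm → Prop := Relation.ReflTransGen StepN
def StepsV : NTerm → NTerm → Prop := Relation.ReflTransGen StepV

/-- the call-by-name translation into dBang. -/
def tradN : NTerm → DTerm
  | .var x => .var x
  | .lam x M => .lam x (tradN M)
  | .app M N => .app (tradN M) (.bang (tradN N))
  | .sub M x N => .sub (tradN M) x (.bang (tradN N))
  | .bot => .bot

/-- decompose M = L⟨!P⟩, returning L⟨P⟩. -/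
def debang : DTerm → Option DTerm
  | .bang P => some P
  | .sub M x N => (debang M).map fun M' => .sub M' x N
  | _ => none

/-- the call-by-value translation into dBang. -/
def tradV : NTerm → DTerm
  | .var x => .bang (.var x)
  | .lam x M => .bang (.lam x (tradV M))
  | .app M N =>
      match debang (tradV M) with
      | some Q => .app Q (tradV N)
      | none => .app (.der (tradV M)) (tradV N)
  | .sub M x N => .sub (tradV M) x (tradV N)
  | .bot => .bot

/-- the CbN approximation relation ⊲ₙ. -/
inductive ApproxN : RTerm → NTerm → Prop
  | var (x) : ApproxN (.var x) (.var x)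
  | lam {m M} (x) : ApproxN m M → ApproxN (.lam x m) (.lam x M)
  | app {m M ns N} : ApproxN m M → (∀ n ∈ ns, ApproxN n N) →
      ApproxN (.app m (.bag ns)) (.app M N)
  | sub {m M ns N} (x) : ApproxN m M → (∀ n ∈ ns, ApproxN n N) →
      ApproxN (.sub m x (.bag ns)) (.sub M x N)

def TaylorN (M : NTerm) : Set RTerm := {m | ApproxN m M}

/-- the CbV approximation relation ⊲ᵥ. -/
inductive ApproxV : RTerm → NTerm → Prop
  | var (x k) : ApproxV (.bag (List.replicate k (.var x))) (.var x)
  | lam {ms : List RTerm} {M} (x) : (∀ m ∈ ms, ApproxV m M) →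
      ApproxV (.bag (ms.map (RTerm.lam x))) (.lam x M)
  | appN {m M n N} : ¬ IsValueN M → ApproxV m M → ApproxV n N →
      ApproxV (.app (.der m) n) (.app M N)
  | appV {m V n N} : IsValueN V → ApproxV (.bag [m]) V → ApproxV n N →
      ApproxV (.app m n) (.app V N)
  | sub {m M n N} (x) : ApproxV m M → ApproxV n N →
      ApproxV (.sub m x n) (.sub M x N)

def TaylorV (M : NTerm) : Set RTerm := {m | ApproxV m M}

def NFTaylorN (M : NTerm) : Set RTerm :=
  {n | RNormal n ∧ ∃ m, ApproxN m M ∧ RSteps m n}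

def NFTaylorV (M : NTerm) : Set RTerm :=
  {n | RNormal n ∧ ∃ m, ApproxV m M ∧ RSteps m n}

/-- order A ⊑ M on dCBN/dCBV terms. -/
inductive SqSubN : NTerm → NTerm → Prop
  | bot (M) : SqSubN .bot M
  | var (x) : SqSubN (.var x) (.var x)
  | lam (x) {A M} : SqSubN A M → SqSubN (.lam x A) (.lam x M)
  | app {A M B N} : SqSubN A M → SqSubN B N → SqSubN (.app A B) (.app M N)
  | sub {A M B N} (x) : SqSubN A M → SqSubN B N → SqSubN (.sub A x B) (.sub M x N)

mutual
  /-- CbN Böhm approximants Aₙ. -/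
  inductive IsAN : NTerm → Prop
    | bot : IsAN .bot
    | ofNlam {A} : IsNlam A → IsAN A
    | lam (x) {A} : IsAN A → IsAN (.lam x A)
  /-- head shapes N_λ. -/
  inductive IsNlam : NTerm → Prop
    | var (x) : IsNlam (.var x)
    | app {A B} : IsNlam A → IsAN B → IsNlam (.app A B)
end

def BTnSet (M : NTerm) : Set NTerm :=
  {A | IsAN A ∧ ∃ N, StepsN M N ∧ SqSubN A N}

mutual
  /-- CbV Böhm approximants Aᵥ. -/
  inductive IsAV : NTerm → Prop
    | bot : IsAV .bot
    | ofAlam {A} : IsAlam A → IsAV A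
    | lam (x) {A} : IsAV A → IsAV (.lam x A)
    | sub (x) {A B} : IsAV A → IsAxlam B → IsAV (.sub A x B)
  inductive IsAlam : NTerm → Prop
    | var (x) : IsAlam (.var x)
    | app {A B} : IsAlam A → IsAV B → IsAlam (.app A B)
    | sub (x) {A B} : IsAlam A → IsAxlam B → IsAlam (.sub A x B)
  inductive IsAxlam : NTerm → Prop
    | app {A B} : IsAlam A → IsAV B → IsAxlam (.app A B)
    | sub (x) {A B} : IsAxlam A → IsAxlam B → IsAxlam (.sub A x B)
end

def BTvSet (M : NTerm) : Set NTerm :=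
  {A | IsAV A ∧ ∃ N, StepsV M N ∧ SqSubN A N}

def TaylorBTn (M : NTerm) : Set RTerm := {m | ∃ A ∈ BTnSet M, ApproxN m A}
def TaylorBTv (M : NTerm) : Set RTerm := {m | ∃ A ∈ BTvSet M, ApproxV m A}

/-!
The proof is by induction on `M`, following the step of `tradV M`. A root step of the translation
is the image of a dCBV root step: a translation of the shape `L⟨!C⟩` is the translation of some
`L⟨V⟩` with `V` a value and `tradV V = !C`, and the substitution lemma identifies the contracta.
The delicate case is an application `M₁ M₂` with `tradV M₁ = L⟨!P⟩`, translated to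
`L⟨P⟩ (tradV M₂)`: a step of `L⟨P⟩` is lifted to a step of `L⟨!P⟩`, simulated by the induction
hypothesis, and the resulting reduction is projected back through the bang. When `M₁` becomes of
the shape `L⟨V⟩` only after reduction, one administrative `der` step completes the simulation.
-/

lemma lfill_append (l₁ l₂ : List (ℕ × DTerm)) (M : DTerm) :
    lfill (l₁ ++ l₂) M = lfill l₂ (lfill l₁ M) :=
  List.foldl_append

lemma lfill_concat (l : List (ℕ × DTerm)) (x : ℕ) (N M : DTerm) :
    lfill (l ++ [(x, N)]) M = .sub (lfill l M) x N := by
  rw [lfill_append]; rfl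

lemma nlfill_concat (l : List (ℕ × NTerm)) (x : ℕ) (N M : NTerm) :
    nlfill (l ++ [(x, N)]) M = .sub (nlfill l M) x N :=
  List.foldl_append

lemma lfill_inj {l₁ l₂ : List (ℕ × DTerm)} {M₁ M₂ : DTerm} (h : lfill l₁ M₁ = lfill l₂ M₂)
    (h₁ : ∀ A x B, M₁ ≠ .sub A x B) (h₂ : ∀ A x B, M₂ ≠ .sub A x B) : l₁ = l₂ ∧ M₁ = M₂ := by
  induction l₁ using List.reverseRecOn generalizing l₂ with
  | nil =>
    rcases l₂.eq_nil_or_concat with rfl | ⟨L, ⟨y, B⟩, rfl⟩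
    · exact ⟨rfl, h⟩
    · rw [List.concat_eq_append, lfill_concat] at h
      exact absurd h (h₁ _ _ _)
  | append_singleton l p ih =>
    obtain ⟨x, N⟩ := p
    rcases l₂.eq_nil_or_concat with rfl | ⟨L, ⟨y, B⟩, rfl⟩
    · rw [lfill_concat] at h
      exact absurd h.symm (h₂ _ _ _)
    · rw [List.concat_eq_append, lfill_concat, lfill_concat] at h
      injection h with h hx hB
      obtain ⟨rfl, hM⟩ := ih h
      exact ⟨by rw [List.concat_eq_append, hx, hB], hM⟩

lemma debang_lfill (l : List (ℕ × DTerm)) (M : DTerm) :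
    debang (lfill l M) = (debang M).map (lfill l) := by
  induction l generalizing M with
  | nil => cases h : debang M <;> simp [lfill, h]
  | cons p l ih =>
    rw [show lfill (p :: l) M = lfill l (.sub M p.1 p.2) from rfl, ih]
    cases h : debang M <;> simp [debang, h, lfill]

lemma debang_eq_some_iff {A E : DTerm} :
    debang A = some E ↔ ∃ l C, A = lfill l (.bang C) ∧ E = lfill l C := by
  constructor
  · intro h
    induction A generalizing E with
    | bang C => exact ⟨[], C, rfl, (Option.some_inj.mp h).symm⟩
    | sub M x N ihM _ =>
      obtain ⟨E', hE', rfl⟩ := Option.map_eq_some_iff.mp h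
      obtain ⟨l, C, rfl, rfl⟩ := ihM hE'
      exact ⟨l ++ [(x, N)], C, (lfill_concat ..).symm, (lfill_concat ..).symm⟩
    | _ => simp [debang] at h
  · rintro ⟨l, C, rfl, rfl⟩
    rw [debang_lfill]; rfl

lemma debang_dsubst_of_eq_some (B : DTerm) (x : ℕ) {A E : DTerm} (h : debang A = some E) :
    debang (dsubst B x A) = some (dsubst B x E) := by
  induction A generalizing E with
  | bang C => cases h; rfl
  | sub M y N ihM _ =>
    obtain ⟨E', hE', rfl⟩ := Option.map_eq_some_iff.mp h
    by_cases hy : y = x <;> simp [dsubst, debang, hy, hE', ihM hE']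
  | _ => simp [debang] at h

lemma debang_dsubst {B : DTerm} (hB : debang B = none) (x : ℕ) (A : DTerm) :
    debang (dsubst B x A) = (debang A).map (dsubst B x) := by
  induction A with
  | var y => by_cases hy : y = x <;> simp [dsubst, debang, hy, hB]
  | lam y M => by_cases hy : y = x <;> simp [dsubst, debang, hy]
  | sub M y N ihM =>
    by_cases hy : y = x <;> simp [dsubst, debang, hy, ihM, Option.map_map, Function.comp_def]
  | _ => simp [dsubst, debang]

lemma Steps.lam (x : ℕ) {A B : DTerm} (h : Steps A B) : Steps (.lam x A) (.lam x B) :=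
  Relation.ReflTransGen.lift (DTerm.lam x) (fun _ _ => Step.lam x) _ _ h

lemma Steps.bang {A B : DTerm} (h : Steps A B) : Steps (.bang A) (.bang B) :=
  Relation.ReflTransGen.lift DTerm.bang (fun _ _ => Step.bang) _ _ h

lemma Steps.der {A B : DTerm} (h : Steps A B) : Steps (.der A) (.der B) :=
  Relation.ReflTransGen.lift DTerm.der (fun _ _ => Step.der) _ _ h

lemma Steps.appL {A B : DTerm} (N : DTerm) (h : Steps A B) : Steps (.app A N) (.app B N) :=
  Relation.ReflTransGen.lift (DTerm.app · N) (fun _ _ => Step.appL N) _ _ h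

lemma Steps.appR (M : DTerm) {A B : DTerm} (h : Steps A B) : Steps (.app M A) (.app M B) :=
  Relation.ReflTransGen.lift (DTerm.app M) (fun _ _ => Step.appR M) _ _ h

lemma Steps.subL {A B : DTerm} (x : ℕ) (N : DTerm) (h : Steps A B) :
    Steps (.sub A x N) (.sub B x N) :=
  Relation.ReflTransGen.lift (DTerm.sub · x N) (fun _ _ => Step.subL x N) _ _ h

lemma Steps.subR (M : DTerm) (x : ℕ) {A B : DTerm} (h : Steps A B) :
    Steps (.sub M x A) (.sub M x B) :=
  Relation.ReflTransGen.lift (DTerm.sub M x) (fun _ _ => Step.subR M x) _ _ h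

lemma StepsV.lam (x : ℕ) {A B : NTerm} (h : StepsV A B) : StepsV (.lam x A) (.lam x B) :=
  Relation.ReflTransGen.lift (NTerm.lam x) (fun _ _ => StepV.lam x) _ _ h

lemma StepsV.appL {A B : NTerm} (N : NTerm) (h : StepsV A B) : StepsV (.app A N) (.app B N) :=
  Relation.ReflTransGen.lift (NTerm.app · N) (fun _ _ => StepV.appL N) _ _ h

lemma StepsV.appR (M : NTerm) {A B : NTerm} (h : StepsV A B) : StepsV (.app M A) (.app M B) :=
  Relation.ReflTransGen.lift (NTerm.app M) (fun _ _ => StepV.appR M) _ _ h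

lemma StepsV.subL {A B : NTerm} (x : ℕ) (N : NTerm) (h : StepsV A B) :
    StepsV (.sub A x N) (.sub B x N) :=
  Relation.ReflTransGen.lift (NTerm.sub · x N) (fun _ _ => StepV.subL x N) _ _ h

lemma StepsV.subR (M : NTerm) (x : ℕ) {A B : NTerm} (h : StepsV A B) :
    StepsV (.sub M x A) (.sub M x B) :=
  Relation.ReflTransGen.lift (NTerm.sub M x) (fun _ _ => StepV.subR M x) _ _ h

lemma Step.lift_debang {A E F : DTerm} (hA : debang A = some E) (h : Step E F) :
    ∃ B, Step A B ∧ debang B = some F := by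
  induction A generalizing E F with
  | bang C =>
    cases hA
    exact ⟨.bang F, h.bang, rfl⟩
  | sub M x N ihM _ =>
    obtain ⟨E', hE', rfl⟩ := Option.map_eq_some_iff.mp hA
    cases h with
    | root hr =>
      cases hr with
      | subst _ _ l C =>
        refine ⟨lfill l (dsubst C x M), .root (.subst ..), ?_⟩
        rw [debang_lfill, debang_dsubst_of_eq_some C x hE']; rfl
    | subL _ _ h =>
      obtain ⟨B, hB, hdB⟩ := ihM hE' h
      exact ⟨.sub B x N, hB.subL x N, by simp [debang, hdB]⟩
    | subR _ _ h => exact ⟨.sub M x _, .subR M x h, by simp [debang, hE']⟩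
  | _ => simp [debang] at hA

lemma Step.project_debang {A B E : DTerm} (hA : debang A = some E) (h : Step A B) :
    ∃ F, Step E F ∧ debang B = some F := by
  induction A generalizing E B with
  | bang C =>
    cases hA
    cases h with
    | root hr => cases hr
    | bang h => exact ⟨_, h, rfl⟩
  | sub M x N ihM _ =>
    obtain ⟨E', hE', rfl⟩ := Option.map_eq_some_iff.mp hA
    cases h with
    | root hr =>
      cases hr with
      | subst _ _ l C =>
        refine ⟨lfill l (dsubst C x E'), .root (.subst ..), ?_⟩
        rw [debang_lfill, debang_dsubst_of_eq_some C x hE']; rfl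
    | subL _ _ h =>
      obtain ⟨F, hF, hdF⟩ := ihM hE' h
      exact ⟨.sub F x N, hF.subL x N, by simp [debang, hdF]⟩
    | subR _ _ h => exact ⟨.sub E' x _, .subR E' x h, by simp [debang, hE']⟩
  | _ => simp [debang] at hA

lemma Steps.project_debang {A B E : DTerm} (h : Steps A B) (hA : debang A = some E) :
    ∃ F, Steps E F ∧ debang B = some F := by
  induction h with
  | refl => exact ⟨E, .refl, hA⟩
  | tail _ hstep ih =>
    obtain ⟨F, hEF, hF⟩ := ih
    obtain ⟨F', hFF', hF'⟩ := hstep.project_debang hF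
    exact ⟨F', hEF.tail hFF', hF'⟩

def tradVCtx (l : List (ℕ × NTerm)) : List (ℕ × DTerm) :=
  l.map fun p => (p.1, tradV p.2)

lemma tradV_app_of_debang_eq_some {M₁ : NTerm} {E : DTerm} (M₂ : NTerm)
    (h : debang (tradV M₁) = some E) : tradV (.app M₁ M₂) = .app E (tradV M₂) := by
  simp [tradV, h]

lemma tradV_app_of_debang_eq_none {M₁ : NTerm} (M₂ : NTerm) (h : debang (tradV M₁) = none) :
    tradV (.app M₁ M₂) = .app (.der (tradV M₁)) (tradV M₂) := by
  simp [tradV, h]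

lemma tradV_nlfill (l : List (ℕ × NTerm)) (M : NTerm) :
    tradV (nlfill l M) = lfill (tradVCtx l) (tradV M) := by
  induction l generalizing M with
  | nil => rfl
  | cons p l ih => exact ih (.sub M p.1 p.2)

lemma tradV_nsubst {V : NTerm} {Q : DTerm} (hV : IsValueN V) (hQ : tradV V = .bang Q)
    (x : ℕ) (M : NTerm) : tradV (nsubst V x M) = dsubst Q x (tradV M) := by
  have hQ_none : debang Q = none := by
    cases V <;> simp only [IsValueN, tradV, DTerm.bang.injEq] at hV hQ <;> subst hQ <;> rfl
  induction M with
  | var y => by_cases hy : y = x <;> simp [nsubst, tradV, dsubst, hy, hQ]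
  | lam y M ih => by_cases hy : y = x <;> simp [nsubst, tradV, dsubst, hy, ih]
  | app M₁ M₂ ih₁ ih₂ =>
    have hd : debang (tradV (nsubst V x M₁)) = (debang (tradV M₁)).map (dsubst Q x) := by
      rw [ih₁, debang_dsubst hQ_none]
    cases h₁ : debang (tradV M₁) with
    | some E =>
      rw [h₁, Option.map_some] at hd
      simp [nsubst, tradV_app_of_debang_eq_some _ hd, tradV_app_of_debang_eq_some _ h₁, dsubst,
        ih₂]
    | none =>
      rw [h₁, Option.map_none] at hd
      simp [nsubst, tradV_app_of_debang_eq_none _ hd, tradV_app_of_debang_eq_none _ h₁, dsubst,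
        ih₁, ih₂]
  | sub M₁ y M₂ ih₁ ih₂ => by_cases hy : y = x <;> simp [nsubst, tradV, dsubst, hy, ih₁, ih₂]
  | bot => rfl

lemma tradV_eq_lfill_bang {M : NTerm} {l : List (ℕ × DTerm)} {C : DTerm}
    (h : tradV M = lfill l (.bang C)) :
    ∃ l' V, IsValueN V ∧ M = nlfill l' V ∧ l = tradVCtx l' ∧ tradV V = .bang C := by
  induction M generalizing l with
  | var _ | lam _ _ _ =>
    rcases l.eq_nil_or_concat with rfl | ⟨L, ⟨y, B⟩, rfl⟩
    · exact ⟨[], _, by trivial, rfl, rfl, h⟩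
    · simp [tradV, List.concat_eq_append, lfill_concat] at h
  | app M₁ M₂ =>
    have hd := debang_eq_some_iff.mpr ⟨l, C, h, rfl⟩
    cases h₁ : debang (tradV M₁) <;> simp [tradV, h₁, debang] at hd
  | sub M₁ x M₂ ih₁ =>
    rcases l.eq_nil_or_concat with rfl | ⟨L, ⟨y, B⟩, rfl⟩
    · cases h
    · rw [List.concat_eq_append, lfill_concat] at h
      obtain ⟨h₁, rfl, rfl⟩ := DTerm.sub.inj h
      obtain ⟨l', V, hV, rfl, rfl, hV'⟩ := ih₁ h₁
      exact ⟨l' ++ [(x, M₂)], V, hV, (nlfill_concat ..).symm, by simp [tradVCtx], hV'⟩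
  | bot => simpa [tradV, debang] using debang_eq_some_iff.mpr ⟨l, C, h, rfl⟩

lemma steps_der_tradV_app (M N : NTerm) :
    Steps (.app (.der (tradV M)) (tradV N)) (tradV (.app M N)) := by
  cases h : debang (tradV M) with
  | none =>
    rw [tradV_app_of_debang_eq_none N h]
    exact .refl
  | some E =>
    obtain ⟨l, C, hM, rfl⟩ := debang_eq_some_iff.mp h
    rw [tradV_app_of_debang_eq_some N h, hM]
    exact .single (.appL _ (.root (.der l C)))

lemma Root.tradV_app {M₁ M₂ : NTerm} {E N : DTerm} (hE : debang (tradV M₁) = some E)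
    (h : Root (.app E (tradV M₂)) N) : ∃ P, StepV (.app M₁ M₂) P ∧ tradV P = N := by
  cases h with
  | beta l x B =>
    obtain ⟨l₀, C, hM₁, hC⟩ := debang_eq_some_iff.mp hE
    obtain ⟨l', V, hV, rfl, rfl, hVC⟩ := tradV_eq_lfill_bang hM₁
    cases V with
    | var y =>
      obtain rfl := DTerm.bang.inj hVC.symm
      exact absurd (lfill_inj hC (by simp) (by simp)).2 nofun
    | lam y B₀ =>
      obtain rfl := DTerm.bang.inj hVC.symm
      obtain ⟨rfl, hlam⟩ := lfill_inj hC (by simp) (by simp)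
      obtain ⟨rfl, rfl⟩ := DTerm.lam.inj hlam
      exact ⟨nlfill l' (.sub B₀ x M₂), .root (.beta ..), tradV_nlfill ..⟩
    | _ => exact hV.elim

lemma Root.tradV_sub {M₁ M₂ : NTerm} {x : ℕ} {N : DTerm}
    (h : Root (.sub (tradV M₁) x (tradV M₂)) N) : ∃ P, StepV (.sub M₁ x M₂) P ∧ tradV P = N := by
  generalize hB : tradV M₂ = B at h
  cases h with
  | subst _ _ l C =>
    obtain ⟨l', V, hV, rfl, rfl, hVC⟩ := tradV_eq_lfill_bang hB
    exact ⟨nlfill l' (nsubst V x M₁), .root (.subst M₁ x l' hV),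
      by rw [tradV_nlfill, tradV_nsubst hV hVC]⟩

def SimulatedV (M : NTerm) : Prop :=
  ∀ N, Step (tradV M) N → ∃ P, StepsV M P ∧ Steps N (tradV P)

lemma simulatedV_var (x : ℕ) : SimulatedV (.var x) := by
  intro N h
  cases h with
  | root h => cases h
  | bang h => cases h with | root h => cases h

lemma simulatedV_bot : SimulatedV .bot := by
  rintro N ⟨⟨⟩⟩

lemma simulatedV_lam (x : ℕ) {M : NTerm} (ih : SimulatedV M) : SimulatedV (.lam x M) := by
  intro N h
  cases h with
  | root h => cases h
  | bang h =>
    cases h with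
    | root h => cases h
    | lam _ h =>
      obtain ⟨P, hMP, hNP⟩ := ih _ h
      exact ⟨.lam x P, hMP.lam x, (hNP.lam x).bang⟩

lemma simulatedV_sub (x : ℕ) {M₁ M₂ : NTerm} (ih₁ : SimulatedV M₁) (ih₂ : SimulatedV M₂) :
    SimulatedV (.sub M₁ x M₂) := by
  intro N h
  cases h with
  | root h =>
    obtain ⟨P, hP, rfl⟩ := h.tradV_sub
    exact ⟨P, .single hP, .refl⟩
  | subL _ _ h =>
    obtain ⟨P, hMP, hNP⟩ := ih₁ _ h
    exact ⟨.sub P x M₂, hMP.subL x M₂, hNP.subL x _⟩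
  | subR _ _ h =>
    obtain ⟨P, hMP, hNP⟩ := ih₂ _ h
    exact ⟨.sub M₁ x P, hMP.subR M₁ x, hNP.subR _ x⟩

lemma simulatedV_app_of_debang_eq_some {M₁ M₂ : NTerm} {E : DTerm}
    (hE : debang (tradV M₁) = some E) (ih₁ : SimulatedV M₁) (ih₂ : SimulatedV M₂) :
    SimulatedV (.app M₁ M₂) := by
  intro N h
  rw [tradV_app_of_debang_eq_some M₂ hE] at h
  cases h with
  | root h =>
    obtain ⟨P, hP, rfl⟩ := h.tradV_app hE
    exact ⟨P, .single hP, .refl⟩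
  | appL _ h =>
    obtain ⟨B, hB, hdB⟩ := h.lift_debang hE
    obtain ⟨P, hMP, hBP⟩ := ih₁ _ hB
    obtain ⟨F, hF, hdF⟩ := hBP.project_debang hdB
    refine ⟨.app P M₂, hMP.appL M₂, ?_⟩
    rw [tradV_app_of_debang_eq_some M₂ hdF]
    exact hF.appL _
  | appR _ h =>
    obtain ⟨P, hMP, hNP⟩ := ih₂ _ h
    refine ⟨.app M₁ P, hMP.appR M₁, ?_⟩
    rw [tradV_app_of_debang_eq_some P hE]
    exact hNP.appR E

lemma simulatedV_app_of_debang_eq_none {M₁ M₂ : NTerm} (hd : debang (tradV M₁) = none)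
    (ih₁ : SimulatedV M₁) (ih₂ : SimulatedV M₂) : SimulatedV (.app M₁ M₂) := by
  intro N h
  rw [tradV_app_of_debang_eq_none M₂ hd] at h
  cases h with
  | root h =>
    generalize hA : DTerm.der (tradV M₁) = A at h
    cases h with
    | beta l =>
      exact absurd (lfill_inj (l₂ := []) hA.symm (by simp) (by simp)).2 nofun
  | appL _ h =>
    cases h with
    | root h =>
      generalize hA : tradV M₁ = A at h hd
      cases h with
      | der l C => simp [debang_lfill, debang] at hd
    | der h =>
      obtain ⟨P, hMP, hNP⟩ := ih₁ _ h
      exact ⟨.app P M₂, hMP.appL M₂, (hNP.der.appL _).trans (steps_der_tradV_app P M₂)⟩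
  | appR _ h =>
    obtain ⟨P, hMP, hNP⟩ := ih₂ _ h
    refine ⟨.app M₁ P, hMP.appR M₁, ?_⟩
    rw [tradV_app_of_debang_eq_none P hd]
    exact hNP.appR _

lemma simulatedV_app {M₁ M₂ : NTerm} (ih₁ : SimulatedV M₁) (ih₂ : SimulatedV M₂) :
    SimulatedV (.app M₁ M₂) := by
  cases h : debang (tradV M₁) with
  | some E => exact simulatedV_app_of_debang_eq_some h ih₁ ih₂
  | none => exact simulatedV_app_of_debang_eq_none h ih₁ ih₂

theorem cbv_embedding (M : NTerm) (N : DTerm) (h : Step (tradV M) N) :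
    ∃ P, StepsV M P ∧ Steps N (tradV P) := by
  suffices ∀ M, SimulatedV M from this M N h
  intro M
  induction M with
  | var x => exact simulatedV_var x
  | lam x M ih => exact simulatedV_lam x ih
  | app M₁ M₂ ih₁ ih₂ => exact simulatedV_app ih₁ ih₂
  | sub M₁ x M₂ ih₁ ih₂ => exact simulatedV_sub x ih₁ ih₂
  | bot => exact simulatedV_bot

end DBangPaper
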